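/- Let A be an n × n real matrix partitioned into an N × N block matrix with square diagonal blocks of sizes b_1, …, b_N, and let t = (t_1; …; t_N) be a vector of size n partitioned conformally. Suppose blocks C̄_{ij} are defined as in the block filtering decomposition: C̄_{ij} = A_{ij} if i = 1 or j = 1, and C̄_{ij} = A_{ij} − Σ_{k=1}^{min(i,j)−1} L̄_{ik} F̄_{kj} Ū_{kj} otherwise, with L̄_{ik} = C̄_{ik} for i > k, Ū_{kj} = C̄_{kj} for k < j, invertible diagonal blocks D̄_{kk} = C̄_{kk}, and each F̄_{kj} satisfying F̄_{kj} (Ū_{kj} t_j) = D̄_{kk}^{-1} (Ū_{kj} t_j). Let M = (L̄ + D̄) D̄^{-1} (Ū + D̄) and B = M − A. Then every block of B annihilates the corresponding part of the filtering vector: B_{ij} t_j = 0 for all 1 ≤ i, j ≤ N. -/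

import Mathlib

open Matrix

/-- The `(i,j)` block of a matrix partitioned into an `N × N` block structure with
diagonal blocks of sizes `b 0, …, b (N-1)`. -/
def blk {N : ℕ} {b : Fin N → ℕ}
    (A : Matrix ((k : Fin N) × Fin (b k)) ((k : Fin N) × Fin (b k)) ℝ)
    (i j : Fin N) : Matrix (Fin (b i)) (Fin (b j)) ℝ :=
  Matrix.of fun x y => A ⟨i, x⟩ ⟨j, y⟩

/-!
Expanding `M = (L̄ + D̄) D̄⁻¹ (Ū + D̄)` gives `M = L̄ D̄⁻¹ Ū + L̄ + Ū + D̄`, and `L̄ + Ū + D̄`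
has blocks `C̄ᵢⱼ`, so `Mᵢⱼ = C̄ᵢⱼ + ∑_{k < i, k < j} C̄ᵢₖ C̄ₖₖ⁻¹ C̄ₖⱼ`. On the other hand
the recursion gives `Aᵢⱼ = C̄ᵢⱼ + ∑_{k < i, k < j} C̄ᵢₖ F̄ₖⱼ C̄ₖⱼ`. The two sums differ
only in `F̄ₖⱼ` versus `C̄ₖₖ⁻¹`, and these agree on `C̄ₖⱼ tⱼ`, so `(M - A)ᵢⱼ tⱼ = 0`.
-/

theorem add_mul_mul_add_eq_of_mul_eq_one {R : Type*} [Ring R] {L U D E : R}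
    (hDE : D * E = 1) (hED : E * D = 1) :
    (L + D) * E * (U + D) = L * E * U + L + U + D := by
  simp only [add_mul, mul_add, mul_assoc, hDE, hED, mul_one, one_mul]
  abel

theorem blockDiagonal'_mul_blockDiagonal'_inv {ι α : Type*} [Fintype ι] [DecidableEq ι]
    [CommRing α] {n : ι → Type*} [∀ k, Fintype (n k)] [∀ k, DecidableEq (n k)]
    {d : ∀ k, Matrix (n k) (n k) α} (hd : ∀ k, IsUnit (d k)) :
    blockDiagonal' d * blockDiagonal' (fun k => (d k)⁻¹) = 1 := by
  rw [← blockDiagonal'_mul, ← blockDiagonal'_one]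
  exact congrArg _ (funext fun k => mul_nonsing_inv _ ((isUnit_iff_isUnit_det _).mp (hd k)))

theorem blockDiagonal'_inv_mul_blockDiagonal' {ι α : Type*} [Fintype ι] [DecidableEq ι]
    [CommRing α] {n : ι → Type*} [∀ k, Fintype (n k)] [∀ k, DecidableEq (n k)]
    {d : ∀ k, Matrix (n k) (n k) α} (hd : ∀ k, IsUnit (d k)) :
    blockDiagonal' (fun k => (d k)⁻¹) * blockDiagonal' d = 1 := by
  rw [← blockDiagonal'_mul, ← blockDiagonal'_one]
  exact congrArg _ (funext fun k => nonsing_inv_mul _ ((isUnit_iff_isUnit_det _).mp (hd k)))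

section Blocks

variable {N : ℕ} {b : Fin N → ℕ}
  (X Y : Matrix ((k : Fin N) × Fin (b k)) ((k : Fin N) × Fin (b k)) ℝ)
  (d : ∀ k : Fin N, Matrix (Fin (b k)) (Fin (b k)) ℝ)

theorem blk_add (i j : Fin N) : blk (X + Y) i j = blk X i j + blk Y i j := rfl

theorem blk_sub (i j : Fin N) : blk (X - Y) i j = blk X i j - blk Y i j := rfl

theorem blk_mul (i j : Fin N) : blk (X * Y) i j = ∑ k, blk X i k * blk Y k j := by
  ext x y
  simp only [blk, mul_apply, of_apply, Matrix.sum_apply]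
  rw [← Finset.univ_sigma_univ, Finset.sum_sigma]

theorem blk_blockDiagonal'_self (i : Fin N) : blk (blockDiagonal' d) i i = d i := by
  ext x y
  simp [blk, blockDiagonal'_apply]

theorem blk_blockDiagonal'_of_ne {i j : Fin N} (h : i ≠ j) : blk (blockDiagonal' d) i j = 0 := by
  ext x y
  simp [blk, blockDiagonal'_apply_ne _ _ _ h]

theorem blk_mul_blockDiagonal' (i j : Fin N) :
    blk (X * blockDiagonal' d) i j = blk X i j * d j := by
  rw [blk_mul, Finset.sum_eq_single j, blk_blockDiagonal'_self]
  · intro k _ hkj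
    rw [blk_blockDiagonal'_of_ne d hkj, Matrix.mul_zero]
  · exact fun h => absurd (Finset.mem_univ j) h

theorem blk_mul_blockDiagonal'_mul (i j : Fin N) :
    blk (X * blockDiagonal' d * Y) i j = ∑ k, blk X i k * d k * blk Y k j := by
  simp only [blk_mul (X * blockDiagonal' d), blk_mul_blockDiagonal']

end Blocks

section Splitting

variable {N : ℕ} {b : Fin N → ℕ} {C : ∀ i j : Fin N, Matrix (Fin (b i)) (Fin (b j)) ℝ}
  {L U : Matrix ((k : Fin N) × Fin (b k)) ((k : Fin N) × Fin (b k)) ℝ}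

theorem blk_add_add_blockDiagonal'_eq
    (hL : ∀ i j : Fin N, j < i → blk L i j = C i j)
    (hL0 : ∀ i j : Fin N, ¬ j < i → blk L i j = 0)
    (hU : ∀ i j : Fin N, i < j → blk U i j = C i j)
    (hU0 : ∀ i j : Fin N, ¬ i < j → blk U i j = 0)
    (i j : Fin N) :
    blk (L + U + blockDiagonal' fun k => C k k) i j = C i j := by
  rw [blk_add, blk_add]
  rcases lt_trichotomy i j with h | rfl | h
  · rw [hL0 i j h.asymm, hU i j h, blk_blockDiagonal'_of_ne _ h.ne, zero_add, add_zero]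
  · rw [hL0 i i (lt_irrefl i), hU0 i i (lt_irrefl i), blk_blockDiagonal'_self, zero_add, zero_add]
  · rw [hL i j h, hU0 i j h.asymm, blk_blockDiagonal'_of_ne _ h.ne', add_zero, add_zero]

theorem sum_blk_mul_inv_mul_blk_eq
    (hL : ∀ i j : Fin N, j < i → blk L i j = C i j)
    (hL0 : ∀ i j : Fin N, ¬ j < i → blk L i j = 0)
    (hU : ∀ i j : Fin N, i < j → blk U i j = C i j)
    (hU0 : ∀ i j : Fin N, ¬ i < j → blk U i j = 0)
    (i j : Fin N) :
    ∑ k, blk L i k * (C k k)⁻¹ * blk U k j =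
      ∑ k ∈ Finset.univ.filter (fun k : Fin N => k < i ∧ k < j),
        C i k * (C k k)⁻¹ * C k j := by
  rw [Finset.sum_filter]
  refine Finset.sum_congr rfl fun k _ => ?_
  by_cases hk : k < i ∧ k < j
  · rw [if_pos hk, hL i k hk.1, hU k j hk.2]
  · rw [if_neg hk]
    rcases not_and_or.mp hk with h | h
    · rw [hL0 i k h, Matrix.zero_mul, Matrix.zero_mul]
    · rw [hU0 k j h, Matrix.mul_zero]

theorem blk_preconditioner (hD : ∀ k : Fin N, IsUnit (C k k))
    (hL : ∀ i j : Fin N, j < i → blk L i j = C i j)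
    (hL0 : ∀ i j : Fin N, ¬ j < i → blk L i j = 0)
    (hU : ∀ i j : Fin N, i < j → blk U i j = C i j)
    (hU0 : ∀ i j : Fin N, ¬ i < j → blk U i j = 0)
    (i j : Fin N) :
    blk ((L + blockDiagonal' (fun k => C k k)) * blockDiagonal' (fun k => (C k k)⁻¹) *
        (U + blockDiagonal' (fun k => C k k))) i j =
      C i j + ∑ k ∈ Finset.univ.filter (fun k : Fin N => k < i ∧ k < j),
        C i k * (C k k)⁻¹ * C k j := by
  rw [add_mul_mul_add_eq_of_mul_eq_one (blockDiagonal'_mul_blockDiagonal'_inv hD)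
    (blockDiagonal'_inv_mul_blockDiagonal' hD), add_assoc, add_assoc, ← add_assoc L, blk_add,
    blk_add_add_blockDiagonal'_eq hL hL0 hU hU0, blk_mul_blockDiagonal'_mul,
    sum_blk_mul_inv_mul_blk_eq hL hL0 hU hU0, add_comm]

end Splitting

theorem filter_lt_and_lt_eq_empty {N : ℕ} {i j : Fin N} (h : i.1 = 0 ∨ j.1 = 0) :
    Finset.univ.filter (fun k : Fin N => k < i ∧ k < j) = ∅ := by
  refine Finset.filter_false_of_mem fun k _ hk => ?_
  rcases h with h | h
  · exact absurd hk.1 (by simp [Fin.lt_def, h])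
  · exact absurd hk.2 (by simp [Fin.lt_def, h])

/-- For the block filtering preconditioner `M = (L̄ + D̄) D̄⁻¹ (Ū + D̄)`, every block of
`B = M - A` annihilates the corresponding part of the filtering vector:
`Bᵢⱼ tⱼ = 0` for all `i, j`. -/
theorem block_filtering_blockwise_annihilation {N : ℕ} {b : Fin N → ℕ}
    (A : Matrix ((k : Fin N) × Fin (b k)) ((k : Fin N) × Fin (b k)) ℝ)
    (t : ((k : Fin N) × Fin (b k)) → ℝ)
    (C : ∀ i j : Fin N, Matrix (Fin (b i)) (Fin (b j)) ℝ)
    (F : ∀ k j : Fin N, Matrix (Fin (b k)) (Fin (b k)) ℝ)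
    (hD : ∀ k : Fin N, IsUnit (C k k))
    (hC1 : ∀ i j : Fin N, i.1 = 0 ∨ j.1 = 0 → C i j = blk A i j)
    (hC2 : ∀ i j : Fin N, i.1 ≠ 0 → j.1 ≠ 0 →
      C i j = blk A i j -
        ∑ k ∈ Finset.univ.filter (fun k : Fin N => k < i ∧ k < j),
          C i k * F k j * C k j)
    (hF : ∀ k j : Fin N, k < j →
      (F k j) *ᵥ ((C k j) *ᵥ fun y => t ⟨j, y⟩) =
        (C k k)⁻¹ *ᵥ ((C k j) *ᵥ fun y => t ⟨j, y⟩))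
    (L U M : Matrix ((k : Fin N) × Fin (b k)) ((k : Fin N) × Fin (b k)) ℝ)
    (hL : ∀ i j : Fin N, j < i → blk L i j = C i j)
    (hL0 : ∀ i j : Fin N, ¬ j < i → blk L i j = 0)
    (hU : ∀ i j : Fin N, i < j → blk U i j = C i j)
    (hU0 : ∀ i j : Fin N, ¬ i < j → blk U i j = 0)
    (hM : M = (L + blockDiagonal' (fun k => C k k)) *
        blockDiagonal' (fun k => (C k k)⁻¹) *
        (U + blockDiagonal' (fun k => C k k))) :
    ∀ i j : Fin N, (blk (M - A) i j) *ᵥ (fun y => t ⟨j, y⟩) = 0 := by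
  intro i j
  have hA : blk A i j = C i j + ∑ k ∈ Finset.univ.filter (fun k : Fin N => k < i ∧ k < j),
      C i k * F k j * C k j := by
    by_cases h0 : i.1 = 0 ∨ j.1 = 0
    · rw [hC1 i j h0, filter_lt_and_lt_eq_empty h0, Finset.sum_empty, add_zero]
    · obtain ⟨hi, hj⟩ := not_or.mp h0
      rw [hC2 i j hi hj, sub_add_cancel]
  have hFt : ∀ k ∈ Finset.univ.filter (fun k : Fin N => k < i ∧ k < j),
      (C i k * (C k k)⁻¹ * C k j) *ᵥ (fun y => t ⟨j, y⟩) =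
        (C i k * F k j * C k j) *ᵥ (fun y => t ⟨j, y⟩) := by
    intro k hk
    simp only [← mulVec_mulVec, hF k j (Finset.mem_filter.mp hk).2.2]
  rw [blk_sub, hM, blk_preconditioner hD hL hL0 hU hU0, hA, sub_mulVec, add_mulVec, add_mulVec,
    sum_mulVec, sum_mulVec, Finset.sum_congr rfl hFt, sub_self]
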